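/- Theorem 1 (error propagation bound for Mirror Descent Value Iteration with constant KL coefficient): Fix λ > 0 and consider the scheme: π_0 the uniform policy; for each k ≥ 0, π_{k+1}(a|s) = π_k(a|s) exp(q_k(s,a)/λ) / Σ_b π_k(b|s) exp(q_k(s,b)/λ) (the maximizer of π ↦ ⟨π, q_k⟩ − λ KL(π||π_k)) and q_{k+1} = T^{λ,0}_{π_{k+1}|π_k} q_k + ε_{k+1} for given ε_{k+1} ∈ ℝ^{S×A}. Let q_max ≥ 0 satisfy ‖q_j‖_∞ ≤ q_max for all j, and let π_* be an optimal policy (q_{π_*} ≥ q_π componentwise for every policy π), with q_* = q_{π_*}. Then for every k ≥ 1: ‖q_* − q_{π_{k+1}}‖_∞ ≤ (2/(1−γ)) · (1/k) · ( ‖Σ_{j=1}^k ε_j‖_∞ + 2 q_max + λ γ ln|A| ). -/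

import Mathlib

open Finset

noncomputable section

/-- A transition kernel on a finite MDP: `P s a s'` is the probability of moving to `s'`
from `s` after action `a`. -/
def IsKernel {S A : Type*} [Fintype S] (P : S → A → S → ℝ) : Prop :=
  (∀ s a s', 0 ≤ P s a s') ∧ ∀ s a, ∑ s', P s a s' = 1

/-- A policy: `π s a` is the probability of action `a` in state `s`. -/
def IsPolicy {S A : Type*} [Fintype A] (π : S → A → ℝ) : Prop :=
  (∀ s a, 0 ≤ π s a) ∧ ∀ s, ∑ a, π s a = 1

/-- `(P v)(s,a) = ∑_{s'} P(s'|s,a) v(s')`. -/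
def kerApp {S A : Type*} [Fintype S] (P : S → A → S → ℝ) (v : S → ℝ) : S → A → ℝ :=
  fun s a => ∑ s', P s a s' * v s'

/-- `⟨f₁,f₂⟩(s) = ∑_a f₁(s,a) f₂(s,a)`. -/
def dotSA {S A : Type*} [Fintype A] (f₁ f₂ : S → A → ℝ) : S → ℝ :=
  fun s => ∑ a, f₁ s a * f₂ s a

/-- The policy-induced transition operator `P_π q = P ⟨π, q⟩` on `ℝ^{S×A}`. -/
def Ppi {S A : Type*} [Fintype S] [Fintype A] (P : S → A → S → ℝ) (π : S → A → ℝ)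
    (q : S → A → ℝ) : S → A → ℝ :=
  kerApp P (dotSA π q)

/-- The Bellman evaluation operator `T_π q = r + γ P_π q`. -/
def bellman {S A : Type*} [Fintype S] [Fintype A] (P : S → A → S → ℝ) (r : S → A → ℝ)
    (γ : ℝ) (π : S → A → ℝ) (q : S → A → ℝ) : S → A → ℝ :=
  fun s a => r s a + γ * Ppi P π q s a

/-- The Shannon entropy of a policy, `H(π)(s) = -∑_a π(a|s) ln π(a|s)` (with `0 ln 0 = 0`). -/
def entPol {S A : Type*} [Fintype A] (π : S → A → ℝ) : S → ℝ :=
  fun s => -∑ a, π s a * Real.log (π s a)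

/-- The KL divergence between policies,
`KL(π₁‖π₂)(s) = ∑_a π₁(a|s)(ln π₁(a|s) - ln π₂(a|s))`. -/
def klPol {S A : Type*} [Fintype A] (π₁ π₂ : S → A → ℝ) : S → ℝ :=
  fun s => ∑ a, π₁ s a * (Real.log (π₁ s a) - Real.log (π₂ s a))

/-- The KL-regularized Bellman operator `T^{λ,0}_{π|μ} q = r + γ P(⟨π,q⟩ - λ KL(π‖μ))`. -/
def TKL {S A : Type*} [Fintype S] [Fintype A] (P : S → A → S → ℝ) (r : S → A → ℝ)
    (γ lam : ℝ) (π μ : S → A → ℝ) (q : S → A → ℝ) : S → A → ℝ :=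
  fun s a => r s a + γ * kerApp P (fun s' => dotSA π q s' - lam * klPol π μ s') s a

/-- The entropy-regularized Bellman operator `T^{0,τ}_π q = r + γ P(⟨π,q⟩ + τ H(π))`. -/
def TH {S A : Type*} [Fintype S] [Fintype A] (P : S → A → S → ℝ) (r : S → A → ℝ)
    (γ tau : ℝ) (π : S → A → ℝ) (q : S → A → ℝ) : S → A → ℝ :=
  fun s a => r s a + γ * kerApp P (fun s' => dotSA π q s' + tau * entPol π s') s a

/-!
With `Q n = ∑ j < n, q j`, the iterates are the softmax policies `π n = softmax λ (Q n)`, and the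
KL-regularized backup telescopes: `⟨π (j+1), q j⟩ - λ KL(π (j+1) ‖ π j) = Ψ (j+1) - Ψ j` for
the soft value `Ψ n = λ log ∑ₐ exp (Q n / λ)`, with `Ψ 0 = λ log |A|`. Summing the recursion,
`Q (k+1) = q 0 + k r + γ P (Ψ k - λ log |A|) + ∑_{j=1}^k ε j`. The Gibbs variational principle
gives `⟨π*, Q (k+1)⟩ - qmax ≤ Ψ k ≤ ⟨π (k+1), Q (k+1)⟩ + λ log |A| + qmax`, so `Q (k+1)`
satisfies the Bellman equations of `k q*` and of `k q_{π (k+1)}` up to one-sided errors of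
size `O(qmax + λ log |A| + ‖∑ ε‖)`. Since `γ P_π` contracts in the sup norm, this bounds
`k q* - Q (k+1)` and `Q (k+1) - k q_{π (k+1)}` by `O(1/(1-γ))`; their sum bounds
`k (q* - q_{π (k+1)})`, which is nonnegative by optimality of `π*`.
-/

section Softmax

open Real

variable {A : Type*} [Fintype A]

def softmax (τ : ℝ) (x : A → ℝ) (a : A) : ℝ :=
  exp (x a / τ) / ∑ b, exp (x b / τ)

def logSumExp (τ : ℝ) (x : A → ℝ) : ℝ :=
  τ * log (∑ b, exp (x b / τ))

lemma softmax_zero (τ : ℝ) (a : A) : softmax τ 0 a = 1 / Fintype.card A := by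
  simp [softmax]

lemma logSumExp_zero (τ : ℝ) : logSumExp τ (0 : A → ℝ) = τ * log (Fintype.card A) := by
  simp [logSumExp]

lemma negMulLog_add_mul_log_le {p t : ℝ} (hp : 0 ≤ p) (ht : 0 < t) :
    negMulLog p + p * log t ≤ t - p := by
  rcases hp.eq_or_lt with rfl | hp
  · simpa using ht.le
  have h := mul_le_mul_of_nonneg_left
    (negMulLog_le_one_sub_self (div_nonneg hp.le ht.le)) ht.le
  rw [negMulLog, log_div hp.ne' ht.ne'] at h
  have e₁ : t * (-(p / t) * (log p - log t)) = negMulLog p + p * log t := by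
    rw [negMulLog]; field_simp; ring
  have e₂ : t * (1 - p / t) = t - p := by field_simp
  linarith

variable [Nonempty A]

lemma sum_exp_div_pos (τ : ℝ) (x : A → ℝ) : 0 < ∑ b, exp (x b / τ) :=
  sum_pos (fun _ _ => exp_pos _) univ_nonempty

lemma softmax_pos (τ : ℝ) (x : A → ℝ) (a : A) : 0 < softmax τ x a :=
  div_pos (exp_pos _) (sum_exp_div_pos τ x)

lemma softmax_mem_stdSimplex (τ : ℝ) (x : A → ℝ) : softmax τ x ∈ stdSimplex ℝ A := by
  refine ⟨fun a => (softmax_pos τ x a).le, ?_⟩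
  simp only [softmax, ← sum_div]
  exact div_self (sum_exp_div_pos τ x).ne'

lemma log_softmax (τ : ℝ) (x : A → ℝ) (a : A) :
    log (softmax τ x a) = x a / τ - log (∑ b, exp (x b / τ)) := by
  rw [softmax, log_div (exp_pos _).ne' (sum_exp_div_pos τ x).ne', log_exp]

lemma softmax_mul_exp_div_sum (τ : ℝ) (x y : A → ℝ) (a : A) :
    softmax τ x a * exp (y a / τ) / ∑ b, softmax τ x b * exp (y b / τ) =
      softmax τ (x + y) a := by
  have h : ∀ b, softmax τ x b * exp (y b / τ) = exp ((x + y) b / τ) / ∑ c, exp (x c / τ) := by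
    intro b
    rw [softmax, div_mul_eq_mul_div, ← exp_add, Pi.add_apply, add_div]
  simp only [h, ← sum_div]
  rw [div_div_div_cancel_right₀ (sum_exp_div_pos τ x).ne', softmax]

lemma sum_mul_add_mul_sum_negMulLog_le_logSumExp {τ : ℝ} (hτ : 0 < τ) (x : A → ℝ)
    {ρ : A → ℝ} (hρ : ρ ∈ stdSimplex ℝ A) :
    ∑ a, ρ a * x a + τ * ∑ a, negMulLog (ρ a) ≤ logSumExp τ x := by
  set L := log (∑ b, exp (x b / τ))
  have hterm : ∀ a, negMulLog (ρ a) + ρ a * (x a / τ - L) ≤ softmax τ x a - ρ a := fun a => by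
    simpa only [log_softmax] using negMulLog_add_mul_log_le (hρ.1 a) (softmax_pos τ x a)
  have hsum := sum_le_sum fun a (_ : a ∈ univ) => hterm a
  simp only [sum_add_distrib, sum_sub_distrib, mul_sub, mul_div_assoc'] at hsum
  rw [(softmax_mem_stdSimplex τ x).2, hρ.2, ← sum_mul, hρ.2, ← sum_div] at hsum
  have := mul_le_mul_of_nonneg_left hsum hτ.le
  rw [logSumExp]
  field_simp at this
  linarith

lemma logSumExp_eq_sum_softmax_mul_add {τ : ℝ} (hτ : τ ≠ 0) (x : A → ℝ) :
    logSumExp τ x = ∑ a, softmax τ x a * x a + τ * ∑ a, negMulLog (softmax τ x a) := by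
  simp only [negMulLog, log_softmax, neg_mul, mul_sub, sum_sub_distrib, ← sum_mul,
    (softmax_mem_stdSimplex τ x).2, sum_neg_distrib, mul_div_assoc', ← sum_div]
  rw [logSumExp]
  field_simp
  ring

lemma sum_negMulLog_le_log_card {ρ : A → ℝ} (hρ : ρ ∈ stdSimplex ℝ A) :
    ∑ a, negMulLog (ρ a) ≤ log (Fintype.card A) := by
  simpa [logSumExp_zero] using sum_mul_add_mul_sum_negMulLog_le_logSumExp one_pos 0 hρ

lemma sum_mul_le_logSumExp {τ : ℝ} (hτ : 0 < τ) (x : A → ℝ) {ρ : A → ℝ}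
    (hρ : ρ ∈ stdSimplex ℝ A) : ∑ a, ρ a * x a ≤ logSumExp τ x := by
  have hH : 0 ≤ ∑ a, negMulLog (ρ a) := sum_nonneg fun a _ =>
    negMulLog_nonneg (mem_Icc_of_mem_stdSimplex hρ a).1 (mem_Icc_of_mem_stdSimplex hρ a).2
  nlinarith [sum_mul_add_mul_sum_negMulLog_le_logSumExp hτ x hρ]

lemma logSumExp_le_sum_softmax_mul_add {τ : ℝ} (hτ : 0 < τ) (x : A → ℝ) :
    logSumExp τ x ≤ ∑ a, softmax τ x a * x a + τ * log (Fintype.card A) := by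
  rw [logSumExp_eq_sum_softmax_mul_add hτ.ne']
  gcongr
  exact sum_negMulLog_le_log_card (softmax_mem_stdSimplex τ x)

lemma logSumExp_le_of_le_add {τ : ℝ} (hτ : 0 < τ) {x y : A → ℝ} {c : ℝ}
    (h : ∀ a, x a ≤ y a + c) : logSumExp τ x ≤ logSumExp τ y + c := by
  have hsum : ∑ a, exp (x a / τ) ≤ exp (c / τ) * ∑ a, exp (y a / τ) := by
    rw [mul_sum]
    refine sum_le_sum fun a _ => ?_
    rw [← exp_add, exp_le_exp, ← add_div, div_le_div_iff_of_pos_right hτ]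
    linarith [h a]
  have hlog := log_le_log (sum_exp_div_pos τ x) hsum
  rw [log_mul (exp_pos _).ne' (sum_exp_div_pos τ y).ne', log_exp] at hlog
  have := mul_le_mul_of_nonneg_left hlog hτ.le
  rw [logSumExp, logSumExp]
  field_simp at this
  linarith

lemma sum_softmax_add_mul_sub_kl {τ : ℝ} (hτ : τ ≠ 0) (x y : A → ℝ) :
    ∑ a, softmax τ (x + y) a * y a -
        τ * ∑ a, softmax τ (x + y) a * (log (softmax τ (x + y) a) - log (softmax τ x a)) =
      logSumExp τ (x + y) - logSumExp τ x := by
  simp only [log_softmax, Pi.add_apply]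
  have h : ∀ a, (x a + y a) / τ - log (∑ b, exp ((x b + y b) / τ)) -
      (x a / τ - log (∑ b, exp (x b / τ))) =
      y a / τ + (log (∑ b, exp (x b / τ)) - log (∑ b, exp ((x b + y b) / τ))) := by
    intro a; ring
  simp only [h, mul_add, sum_add_distrib, ← sum_mul, (softmax_mem_stdSimplex τ (x + y)).2]
  simp only [Pi.add_apply, mul_div_assoc', ← sum_div, logSumExp]
  field_simp
  ring

end Softmax

lemma sum_mul_le_of_forall_le {ι : Type*} [Fintype ι] {ρ : ι → ℝ} (hρ : ρ ∈ stdSimplex ℝ ι)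
    {x : ι → ℝ} {M : ℝ} (h : ∀ i, x i ≤ M) : ∑ i, ρ i * x i ≤ M :=
  calc ∑ i, ρ i * x i ≤ ∑ i, ρ i * M :=
        sum_le_sum fun i _ => mul_le_mul_of_nonneg_left (h i) (hρ.1 i)
    _ = M := by rw [← sum_mul, hρ.2, one_mul]

section Kernel

variable {S A : Type*} [Fintype S] {P : S → A → S → ℝ}

lemma IsKernel.mem_stdSimplex (hP : IsKernel P) (s : S) (a : A) : P s a ∈ stdSimplex ℝ S :=
  ⟨hP.1 s a, hP.2 s a⟩

lemma kerApp_mono (hP : IsKernel P) {v w : S → ℝ} (h : ∀ s', v s' ≤ w s') (s : S) (a : A) :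
    kerApp P v s a ≤ kerApp P w s a :=
  sum_le_sum fun s' _ => mul_le_mul_of_nonneg_left (h s') (hP.1 s a s')

lemma kerApp_sub_const (hP : IsKernel P) (v : S → ℝ) (c : ℝ) (s : S) (a : A) :
    kerApp P (fun s' => v s' - c) s a = kerApp P v s a - c := by
  simp only [kerApp, mul_sub, sum_sub_distrib, ← sum_mul, hP.2 s a, one_mul]

lemma kerApp_const (hP : IsKernel P) (c : ℝ) (s : S) (a : A) :
    kerApp P (fun _ => c) s a = c := by
  simp only [kerApp, ← sum_mul, hP.2 s a, one_mul]

end Kernel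

section Evaluation

variable {S A : Type*} [Fintype A] {P : S → A → S → ℝ}

lemma IsPolicy.mem_stdSimplex {π : S → A → ℝ} (hπ : IsPolicy π) (s : S) :
    π s ∈ stdSimplex ℝ A :=
  ⟨hπ.1 s, hπ.2 s⟩

variable [Fintype S]

lemma abs_apply_le_norm (f : S → A → ℝ) (s : S) (a : A) : |f s a| ≤ ‖f‖ :=
  calc |f s a| = ‖f s a‖ := (Real.norm_eq_abs _).symm
    _ ≤ ‖f s‖ := norm_le_pi_norm (f s) a
    _ ≤ ‖f‖ := norm_le_pi_norm f s

lemma norm_le_of_forall_abs_apply_le {f : S → A → ℝ} {B : ℝ} (hB : 0 ≤ B)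
    (h : ∀ s a, |f s a| ≤ B) : ‖f‖ ≤ B :=
  (pi_norm_le_iff_of_nonneg hB).2 fun s => (pi_norm_le_iff_of_nonneg hB).2 fun a =>
    (Real.norm_eq_abs _).trans_le (h s a)

lemma Ppi_sub (π f g : S → A → ℝ) :
    Ppi P π (f - g) = Ppi P π f - Ppi P π g := by
  ext s a
  simp only [Ppi, kerApp, dotSA, Pi.sub_apply, mul_sub, sum_sub_distrib]

lemma Ppi_smul (π : S → A → ℝ) (c : ℝ) (f : S → A → ℝ) :
    Ppi P π (c • f) = c • Ppi P π f := by
  ext s a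
  simp only [Ppi, kerApp, dotSA, Pi.smul_apply, smul_eq_mul, mul_sum]
  exact sum_congr rfl fun _ _ => sum_congr rfl fun _ _ => by ring

lemma Ppi_le_of_forall_le (hP : IsKernel P) {π : S → A → ℝ} (hπ : IsPolicy π)
    {d : S → A → ℝ} {M : ℝ} (h : ∀ s a, d s a ≤ M) (s : S) (a : A) : Ppi P π d s a ≤ M :=
  sum_mul_le_of_forall_le (hP.mem_stdSimplex s a) fun s' =>
    sum_mul_le_of_forall_le (hπ.mem_stdSimplex s') (h s')

lemma le_div_one_sub_of_le_mul_Ppi_add (hP : IsKernel P) {π : S → A → ℝ} (hπ : IsPolicy π)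
    {γ : ℝ} (hγ0 : 0 ≤ γ) (hγ1 : γ < 1) {d : S → A → ℝ} {c : ℝ}
    (h : ∀ s a, d s a ≤ γ * Ppi P π d s a + c) (s : S) (a : A) : d s a ≤ c / (1 - γ) := by
  obtain ⟨p, -, hp⟩ := exists_max_image univ (fun p : S × A => d p.1 p.2) ⟨(s, a), mem_univ _⟩
  have hM : ∀ s a, d s a ≤ d p.1 p.2 := fun s a => hp (s, a) (mem_univ _)
  have hPpi := Ppi_le_of_forall_le hP hπ hM p.1 p.2
  have hpc : d p.1 p.2 ≤ c / (1 - γ) := by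
    rw [le_div_iff₀ (by linarith)]
    nlinarith [h p.1 p.2]
  exact (hM s a).trans hpc

variable {r : S → A → ℝ} {γ : ℝ} {ρ : S → A → ℝ} {qρ : S → A → ℝ}

lemma mul_fixedPoint_sub_le (hP : IsKernel P) (hρ : IsPolicy ρ) (hγ0 : 0 ≤ γ) (hγ1 : γ < 1)
    (hqρ : qρ = bellman P r γ ρ qρ) {x e : S → A → ℝ} {V : S → ℝ} {k c b : ℝ}
    (hx : ∀ s a, x s a = k * r s a + γ * kerApp P V s a + e s a)
    (hV : ∀ s, dotSA ρ x s ≤ V s + c) (he : ∀ s a, -e s a ≤ b) (s : S) (a : A) :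
    k * qρ s a - x s a ≤ (γ * c + b) / (1 - γ) := by
  refine le_div_one_sub_of_le_mul_Ppi_add hP hρ hγ0 hγ1 (d := k • qρ - x) (fun s a => ?_) s a
  have hPV : Ppi P ρ x s a - c ≤ kerApp P V s a := by
    rw [Ppi, ← kerApp_sub_const hP]
    exact kerApp_mono hP (fun s' => by linarith [hV s']) s a
  have hq : qρ s a = r s a + γ * Ppi P ρ qρ s a := congrFun (congrFun hqρ s) a
  rw [Ppi_sub, Ppi_smul]
  simp only [Pi.sub_apply, Pi.smul_apply, smul_eq_mul]
  rw [hq, hx]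
  nlinarith [he s a]

lemma sub_mul_fixedPoint_le (hP : IsKernel P) (hρ : IsPolicy ρ) (hγ0 : 0 ≤ γ) (hγ1 : γ < 1)
    (hqρ : qρ = bellman P r γ ρ qρ) {x e : S → A → ℝ} {V : S → ℝ} {k c b : ℝ}
    (hx : ∀ s a, x s a = k * r s a + γ * kerApp P V s a + e s a)
    (hV : ∀ s, V s ≤ dotSA ρ x s + c) (he : ∀ s a, e s a ≤ b) (s : S) (a : A) :
    x s a - k * qρ s a ≤ (γ * c + b) / (1 - γ) := by
  refine le_div_one_sub_of_le_mul_Ppi_add hP hρ hγ0 hγ1 (d := x - k • qρ) (fun s a => ?_) s a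
  have hPV : kerApp P V s a ≤ Ppi P ρ x s a + c := by
    rw [Ppi, ← sub_le_iff_le_add, ← kerApp_sub_const hP]
    exact kerApp_mono hP (fun s' => by linarith [hV s']) s a
  have hq : qρ s a = r s a + γ * Ppi P ρ qρ s a := congrFun (congrFun hqρ s) a
  rw [Ppi_sub, Ppi_smul]
  simp only [Pi.sub_apply, Pi.smul_apply, smul_eq_mul]
  rw [hq, hx]
  nlinarith [he s a]

end Evaluation

section MDVI

variable {S A : Type*} [Fintype A] {lam : ℝ} {q π : ℕ → S → A → ℝ}

def softValue (lam : ℝ) (q : ℕ → S → A → ℝ) (n : ℕ) (s : S) : ℝ :=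
  logSumExp lam ((∑ j ∈ range n, q j) s)

lemma softValue_zero (lam : ℝ) (q : ℕ → S → A → ℝ) :
    softValue lam q 0 = fun _ => lam * Real.log (Fintype.card A) := by
  ext s
  rw [softValue, sum_range_zero, Pi.zero_apply, logSumExp_zero]

variable [Nonempty A]

lemma mdvi_policy_eq_softmax (hπ0 : ∀ s a, π 0 s a = 1 / (Fintype.card A : ℝ))
    (hπ : ∀ k s a, π (k + 1) s a =
      π k s a * Real.exp (q k s a / lam) / ∑ b, π k s b * Real.exp (q k s b / lam))
    (n : ℕ) (s : S) : π n s = softmax lam ((∑ j ∈ range n, q j) s) := by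
  induction n with
  | zero =>
    ext a
    rw [hπ0, sum_range_zero, Pi.zero_apply, softmax_zero]
  | succ n ih =>
    ext a
    rw [hπ, ih, sum_range_succ, Pi.add_apply, softmax_mul_exp_div_sum]

lemma mdvi_dotSA_sub_klPol (hlam : lam ≠ 0)
    (hπ : ∀ n s, π n s = softmax lam ((∑ j ∈ range n, q j) s))
    (j : ℕ) (s : S) :
    dotSA (π (j + 1)) (q j) s - lam * klPol (π (j + 1)) (π j) s =
      softValue lam q (j + 1) s - softValue lam q j s := by
  simp only [dotSA, klPol, softValue, hπ, sum_range_succ,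
    Pi.add_apply]
  exact sum_softmax_add_mul_sub_kl hlam _ _

lemma dotSA_le_softValue_add (hlam : 0 < lam) {ρ : S → A → ℝ} (hρ : IsPolicy ρ)
    {k : ℕ} {s : S} {qmax : ℝ} (hqk : ∀ a, |q k s a| ≤ qmax) :
    dotSA ρ (∑ j ∈ range (k + 1), q j) s ≤ softValue lam q k s + qmax :=
  (sum_mul_le_logSumExp hlam _ (hρ.mem_stdSimplex s)).trans <|
    logSumExp_le_of_le_add hlam fun a => by
      simp only [sum_range_succ, Pi.add_apply]
      linarith [le_of_abs_le (hqk a)]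

lemma softValue_le_dotSA_add (hlam : 0 < lam)
    (hπ : ∀ n s, π n s = softmax lam ((∑ j ∈ range n, q j) s))
    {k : ℕ} {s : S} {qmax : ℝ} (hqk : ∀ a, |q k s a| ≤ qmax) :
    softValue lam q k s ≤
      dotSA (π (k + 1)) (∑ j ∈ range (k + 1), q j) s +
        (lam * Real.log (Fintype.card A) + qmax) := by
  have hshift : softValue lam q k s ≤ softValue lam q (k + 1) s + qmax :=
    logSumExp_le_of_le_add hlam fun a => by
      simp only [sum_range_succ, Pi.add_apply]
      linarith [neg_le_of_abs_le (hqk a)]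
  have hsoftmax := logSumExp_le_sum_softmax_mul_add hlam ((∑ j ∈ range (k + 1), q j) s)
  rw [← hπ] at hsoftmax
  unfold softValue at hshift ⊢
  rw [dotSA]
  linarith

lemma mdvi_isPolicy (hπ : ∀ n s, π n s = softmax lam ((∑ j ∈ range n, q j) s)) (n : ℕ) :
    IsPolicy (π n) := by
  refine ⟨fun s a => ?_, fun s => ?_⟩ <;> rw [hπ]
  exacts [(softmax_mem_stdSimplex _ _).1 a, (softmax_mem_stdSimplex _ _).2]

variable [Fintype S] {P : S → A → S → ℝ} {r : S → A → ℝ} {γ : ℝ} {ε : ℕ → S → A → ℝ}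

lemma mdvi_sum_range_eq (hP : IsKernel P) (hlam : lam ≠ 0)
    (hπ : ∀ n s, π n s = softmax lam ((∑ j ∈ range n, q j) s))
    (hq : ∀ k s a, q (k + 1) s a =
      TKL P r γ lam (π (k + 1)) (π k) (q k) s a + ε (k + 1) s a)
    (k : ℕ) (s : S) (a : A) :
    (∑ j ∈ range (k + 1), q j) s a = q 0 s a + k * r s a +
      γ * (kerApp P (softValue lam q k) s a - lam * Real.log (Fintype.card A)) +
      (∑ j ∈ Icc 1 k, ε j) s a := by
  induction k with
  | zero => simp [softValue_zero, kerApp_const hP]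
  | succ k ih =>
    have hstep : kerApp P (fun s' => dotSA (π (k + 1)) (q k) s' -
        lam * klPol (π (k + 1)) (π k) s') s a =
        kerApp P (softValue lam q (k + 1)) s a - kerApp P (softValue lam q k) s a := by
      simp only [kerApp, mdvi_dotSA_sub_klPol hlam hπ, mul_sub, sum_sub_distrib]
    rw [sum_range_succ _ (k + 1), Pi.add_apply, Pi.add_apply, ih, hq, TKL, hstep,
      sum_Icc_succ_top (by omega)]
    simp only [Pi.add_apply]
    push_cast
    ring

end MDVI

theorem mdvi_constant_kl_error_propagation_bound_general
    {S A : Type*} [Fintype S] [Fintype A] [Nonempty A]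
    (P : S → A → S → ℝ) (hP : IsKernel P)
    (r : S → A → ℝ) (γ : ℝ) (hγ0 : 0 < γ) (hγ1 : γ < 1)
    (lam : ℝ) (hlam : 0 < lam)
    (q ε : ℕ → S → A → ℝ)
    (π : ℕ → S → A → ℝ)
    (hπ0 : ∀ s a, π 0 s a = 1 / (Fintype.card A : ℝ))
    (hπ : ∀ k s a, π (k + 1) s a =
      π k s a * Real.exp (q k s a / lam) / ∑ b, π k s b * Real.exp (q k s b / lam))
    (hq : ∀ k s a, q (k + 1) s a =
      TKL P r γ lam (π (k + 1)) (π k) (q k) s a + ε (k + 1) s a)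
    (qmax : ℝ) (hqmax : 0 ≤ qmax)
    (hqb : ∀ j, ‖q j‖ ≤ qmax)
    (πstar : S → A → ℝ) (hπstar : IsPolicy πstar)
    (qstar : S → A → ℝ) (hqstar : qstar = bellman P r γ πstar qstar)
    (hopt : ∀ π' : S → A → ℝ, IsPolicy π' →
      ∀ qπ : S → A → ℝ, qπ = bellman P r γ π' qπ → ∀ s a, qπ s a ≤ qstar s a)
    (qpol : ℕ → S → A → ℝ)
    (hqpol : ∀ k, qpol k = bellman P r γ (π k) (qpol k)) :
    ∀ k : ℕ, 1 ≤ k →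
      ‖qstar - qpol (k + 1)‖ ≤
        2 / (1 - γ) * (1 / (k : ℝ)) *
          (‖∑ j ∈ Finset.Icc 1 k, ε j‖ + 2 * qmax
            + lam * γ * Real.log (Fintype.card A)) := by
  intro k hk
  have hπ_softmax := mdvi_policy_eq_softmax hπ0 hπ
  set E := ∑ j ∈ Icc 1 k, ε j
  set c₀ := lam * Real.log (Fintype.card A)
  have hq_abs (j : ℕ) (s : S) (a : A) : |q j s a| ≤ qmax :=
    (abs_apply_le_norm (q j) s a).trans (hqb j)
  have hc₀ : 0 ≤ c₀ := mul_nonneg hlam.le (Real.log_natCast_nonneg _)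
  have hsum (s : S) (a : A) : (∑ j ∈ range (k + 1), q j) s a =
      k * r s a + γ * kerApp P (softValue lam q k) s a + (q 0 s a - γ * c₀ + E s a) := by
    rw [mdvi_sum_range_eq hP hlam.ne' hπ_softmax hq]; ring
  have hπ_pol := mdvi_isPolicy hπ_softmax (k + 1)
  have hstar := mul_fixedPoint_sub_le hP hπstar hγ0.le hγ1 hqstar hsum
    (fun s => dotSA_le_softValue_add hlam hπstar (hq_abs k s))
    (b := qmax + γ * c₀ + ‖E‖) fun s a => by
      linarith [neg_le_of_abs_le (hq_abs 0 s a), neg_le_of_abs_le (abs_apply_le_norm E s a)]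
  have hpol := sub_mul_fixedPoint_le hP hπ_pol hγ0.le hγ1 (hqpol (k + 1)) hsum
    (fun s => softValue_le_dotSA_add hlam hπ_softmax (hq_abs k s))
    (b := qmax - γ * c₀ + ‖E‖) fun s a => by
      linarith [le_of_abs_le (hq_abs 0 s a), le_of_abs_le (abs_apply_le_norm E s a)]
  have hk0 : (0 : ℝ) < k := by exact_mod_cast hk
  refine norm_le_of_forall_abs_apply_le (by positivity) fun s a => ?_
  have hgap : 0 ≤ qstar s a - qpol (k + 1) s a :=
    sub_nonneg.2 (hopt _ hπ_pol _ (hqpol (k + 1)) s a)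
  have hk_gap := add_le_add (hstar s a) (hpol s a)
  rw [← add_div, le_div_iff₀ (by linarith)] at hk_gap
  rw [Pi.sub_apply, Pi.sub_apply, abs_of_nonneg hgap,
    show lam * γ * Real.log (Fintype.card A) = γ * c₀ by ring,
    show ∀ x : ℝ, 2 / (1 - γ) * (1 / k) * x = 2 * x / (k * (1 - γ)) by intro x; field_simp,
    le_div_iff₀ (by nlinarith)]
  nlinarith [mul_nonneg (sub_nonneg.2 hγ1.le) hqmax, mul_nonneg hγ0.le hc₀]

/-- Theorem 1: error propagation bound for Mirror Descent Value
Iteration with a constant KL coefficient `λ`. `‖·‖` on `S → A → ℝ` is the sup norm. -/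
theorem mdvi_constant_kl_error_propagation_bound
    {S A : Type*} [Fintype S] [Fintype A] [Nonempty S] [Nonempty A]
    (P : S → A → S → ℝ) (hP : IsKernel P)
    (r : S → A → ℝ) (γ : ℝ) (hγ0 : 0 < γ) (hγ1 : γ < 1)
    (lam : ℝ) (hlam : 0 < lam)
    (q ε : ℕ → S → A → ℝ)
    (π : ℕ → S → A → ℝ)
    (hπ0 : ∀ s a, π 0 s a = 1 / (Fintype.card A : ℝ))
    (hπ : ∀ k s a, π (k + 1) s a =
      π k s a * Real.exp (q k s a / lam) / ∑ b, π k s b * Real.exp (q k s b / lam))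
    (hq : ∀ k s a, q (k + 1) s a =
      TKL P r γ lam (π (k + 1)) (π k) (q k) s a + ε (k + 1) s a)
    (qmax : ℝ) (hqmax : 0 ≤ qmax)
    (hqb : ∀ j, ‖q j‖ ≤ qmax)
    (πstar : S → A → ℝ) (hπstar : IsPolicy πstar)
    (qstar : S → A → ℝ) (hqstar : qstar = bellman P r γ πstar qstar)
    (hopt : ∀ π' : S → A → ℝ, IsPolicy π' →
      ∀ qπ : S → A → ℝ, qπ = bellman P r γ π' qπ → ∀ s a, qπ s a ≤ qstar s a)
    (qpol : ℕ → S → A → ℝ)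
    (hqpol : ∀ k, qpol k = bellman P r γ (π k) (qpol k)) :
    ∀ k : ℕ, 1 ≤ k →
      ‖qstar - qpol (k + 1)‖ ≤
        2 / (1 - γ) * (1 / (k : ℝ)) *
          (‖∑ j ∈ Finset.Icc 1 k, ε j‖ + 2 * qmax
            + lam * γ * Real.log (Fintype.card A)) :=
  mdvi_constant_kl_error_propagation_bound_general P hP r γ hγ0 hγ1 lam hlam q ε π hπ0 hπ hq qmax
    hqmax hqb πstar hπstar qstar hqstar hopt qpol hqpol
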